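/- arXiv:0910.5157 — 4 statements merged into one kernel-verified Lean document; each statement's English description precedes it below -/
import Mathlib

section
/- Let p(ξ) = βξ³ - αξ|ξ| + γξ with α, β, γ real and |α| ≤ 1, β = 1. If ξ₁ + ξ₂ + ξ₃ + ξ₄ = 0, max(|ξ₁|,|ξ₂|,|ξ₃|,|ξ₄|) ≥ C for a sufficiently large absolute constant C, then |p(ξ₁)+p(ξ₂)+p(ξ₃)+p(ξ₄)| is comparable (with absolute implicit constants) to |(ξ₁+ξ₂)(ξ₁+ξ₃)(ξ₂+ξ₃)|. -/
/-!
On the hyperplane `ξ₁ + ξ₂ + ξ₃ + ξ₄ = 0` the linear part of the symbol cancels and the cubic part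
sums to `-3 (ξ₁ + ξ₂)(ξ₁ + ξ₃)(ξ₂ + ξ₃)`. The quadratic part `Σ ξᵢ|ξᵢ|` is a mixed second difference
of `x ↦ x|x|`, whose derivative `2|x|` is `2`-Lipschitz, so it is bounded by twice the product of
any two of the three pair sums. Since twice the largest frequency is at most the sum of the three
pair sums, one of them is at least `2` once the frequency is large, and the quadratic part is then
dominated by the cubic one.
-/

def signedSq (x : ℝ) : ℝ := x * |x|

lemma abs_mixed_diff_signedSq_le_of_nonneg (x : ℝ) {h k : ℝ} (hh : 0 ≤ h) (hk : 0 ≤ k) :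
    |signedSq (x + h + k) - signedSq (x + h) - signedSq (x + k) + signedSq x| ≤ 2 * h * k := by
  simp only [signedSq]
  rw [abs_le]
  rcases abs_cases (x + h + k) with ⟨h₁, s₁⟩ | ⟨h₁, s₁⟩ <;>
    rcases abs_cases (x + h) with ⟨h₂, s₂⟩ | ⟨h₂, s₂⟩ <;>
    rcases abs_cases (x + k) with ⟨h₃, s₃⟩ | ⟨h₃, s₃⟩ <;>
    rcases abs_cases x with ⟨h₄, s₄⟩ | ⟨h₄, s₄⟩ <;>
    rw [h₁, h₂, h₃, h₄] <;>
    constructor <;>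
    nlinarith [mul_nonneg hh hk]

-- Reversing the sign of a step moves the base point and only flips the sign of the difference.
lemma abs_mixed_diff_signedSq_le (x h k : ℝ) :
    |signedSq (x + h + k) - signedSq (x + h) - signedSq (x + k) + signedSq x| ≤ 2 * |h| * |k| := by
  rcases le_total 0 h with hh | hh <;> rcases le_total 0 k with hk | hk
  · simpa [abs_of_nonneg hh, abs_of_nonneg hk] using abs_mixed_diff_signedSq_le_of_nonneg x hh hk
  · have := abs_mixed_diff_signedSq_le_of_nonneg (x + k) hh (neg_nonneg.2 hk)
    rw [abs_of_nonneg hh, abs_of_nonpos hk, ← abs_neg]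
    convert this using 2; ring_nf
  · have := abs_mixed_diff_signedSq_le_of_nonneg (x + h) (neg_nonneg.2 hh) hk
    rw [abs_of_nonpos hh, abs_of_nonneg hk, ← abs_neg]
    convert this using 2; ring_nf
  · have := abs_mixed_diff_signedSq_le_of_nonneg (x + h + k) (neg_nonneg.2 hh) (neg_nonneg.2 hk)
    rw [abs_of_nonpos hh, abs_of_nonpos hk]
    convert this using 2; ring_nf

lemma abs_sum_signedSq_le_of_sum_eq_zero {a b c d : ℝ} (h : a + b + c + d = 0) :
    |signedSq a + signedSq b + signedSq c + signedSq d| ≤ 2 * |a + b| * |b + c| := by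
  have hodd (x : ℝ) : signedSq (-x) = -signedSq x := by simp [signedSq]
  have := abs_mixed_diff_signedSq_le (-b) (a + b) (b + c)
  rw [show -b + (a + b) + (b + c) = -d by linarith, show -b + (a + b) = a by ring,
    show -b + (b + c) = c by ring, hodd, hodd] at this
  rw [← abs_neg]
  convert this using 2
  ring

lemma two_mul_max_abs_le_of_sum_eq_zero {a b c d : ℝ} (h : a + b + c + d = 0) :
    2 * max |a| (max |b| (max |c| |d|)) ≤ |a + b| + |a + c| + |b + c| := by
  rw [← le_div_iff₀' two_pos]
  simp only [max_le_iff, abs_le]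
  refine ⟨⟨?_, ?_⟩, ⟨?_, ?_⟩, ⟨?_, ?_⟩, ⟨?_, ?_⟩⟩ <;>
    linarith [abs_le.1 (le_refl |a + b|), abs_le.1 (le_refl |a + c|), abs_le.1 (le_refl |b + c|)]

lemma le_mul_mul_of_le_two_mul {q A B C : ℝ} (hA : 0 ≤ A) (hB : 0 ≤ B) (hC : 0 ≤ C)
    (hsum : 6 ≤ A + B + C) (hAB : q ≤ 2 * A * B) (hAC : q ≤ 2 * A * C) (hBC : q ≤ 2 * B * C) :
    q ≤ A * B * C := by
  rcases (by by_contra! h; linarith [h.1, h.2.1, h.2.2] : 2 ≤ A ∨ 2 ≤ B ∨ 2 ≤ C)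
    with h | h | h <;> nlinarith [mul_nonneg hA hB, mul_nonneg hA hC, mul_nonneg hB hC]

lemma abs_sum_signedSq_le_of_sum_eq_zero_of_three_le {a b c d : ℝ} (h : a + b + c + d = 0)
    (hmax : 3 ≤ max |a| (max |b| (max |c| |d|))) :
    |signedSq a + signedSq b + signedSq c + signedSq d| ≤ |(a + b) * (a + c) * (b + c)| := by
  have hAC := abs_sum_signedSq_le_of_sum_eq_zero h
  have hAB := abs_sum_signedSq_le_of_sum_eq_zero (a := b) (b := a) (c := c) (d := d) (by linarith)
  have hBC := abs_sum_signedSq_le_of_sum_eq_zero (a := a) (b := c) (c := b) (d := d) (by linarith)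
  rw [add_comm b a, add_comm (signedSq b)] at hAB
  rw [add_right_comm (signedSq a), add_comm c b] at hBC
  rw [abs_mul, abs_mul]
  exact le_mul_mul_of_le_two_mul (abs_nonneg _) (abs_nonneg _) (abs_nonneg _)
    (by linarith [two_mul_max_abs_le_of_sum_eq_zero h]) hAB hAC hBC

lemma cube_sum_of_sum_eq_zero {a b c d : ℝ} (h : a + b + c + d = 0) :
    a ^ 3 + b ^ 3 + c ^ 3 + d ^ 3 = -(3 * ((a + b) * (a + c) * (b + c))) := by
  obtain rfl : d = -(a + b + c) := by linarith
  ring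

lemma abs_three_mul_add_bounds {P R : ℝ} (h : |R| ≤ |P|) :
    2 * |P| ≤ |3 * P + R| ∧ |3 * P + R| ≤ 4 * |P| := by
  have h3 : |3 * P| = 3 * |P| := by rw [abs_mul, abs_of_pos three_pos]
  constructor <;> linarith [abs_sub_abs_le_abs_add (3 * P) R, abs_add_le (3 * P) R]

theorem stmt3 : ∃ C₀ > (0:ℝ), ∃ C₁ > (0:ℝ),
    ∀ α γ ξ₁ ξ₂ ξ₃ ξ₄ : ℝ, |α| ≤ 1 →
    ξ₁ + ξ₂ + ξ₃ + ξ₄ = 0 →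
    C₀ ≤ max |ξ₁| (max |ξ₂| (max |ξ₃| |ξ₄|)) →
    (let p : ℝ → ℝ := fun ξ => ξ ^ 3 - α * ξ * |ξ| + γ * ξ
     |(ξ₁ + ξ₂) * (ξ₁ + ξ₃) * (ξ₂ + ξ₃)| / C₁ ≤ |p ξ₁ + p ξ₂ + p ξ₃ + p ξ₄| ∧
     |p ξ₁ + p ξ₂ + p ξ₃ + p ξ₄| ≤ C₁ * |(ξ₁ + ξ₂) * (ξ₁ + ξ₃) * (ξ₂ + ξ₃)|) := by
  refine ⟨3, three_pos, 4, four_pos, fun α γ ξ₁ ξ₂ ξ₃ ξ₄ hα hsum hmax => ?_⟩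
  set P := (ξ₁ + ξ₂) * (ξ₁ + ξ₃) * (ξ₂ + ξ₃)
  set Q := signedSq ξ₁ + signedSq ξ₂ + signedSq ξ₃ + signedSq ξ₄
  intro p
  have hsymbol : p ξ₁ + p ξ₂ + p ξ₃ + p ξ₄ = -(3 * P + α * Q) := by
    simp only [p, Q, signedSq]
    linear_combination cube_sum_of_sum_eq_zero hsum + γ * hsum
  have hquad : |α * Q| ≤ |P| := by
    rw [abs_mul]
    exact (mul_le_of_le_one_left (abs_nonneg Q) hα).trans
      (abs_sum_signedSq_le_of_sum_eq_zero_of_three_le hsum hmax)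
  obtain ⟨hlower, hupper⟩ := abs_three_mul_add_bounds hquad
  rw [hsymbol, abs_neg]
  exact ⟨by linarith [abs_nonneg P], hupper⟩
end

section
/- Let a : ℝ → ℝ be twice continuously differentiable. If |η| ≤ |ξ|/4 and |λ| ≤ |ξ|/4, then |a(ξ+η+λ) - a(ξ+η) - a(ξ+λ) + a(ξ)| ≤ |η||λ| · sup_{|ξ'| ∈ [|ξ|/2, 2|ξ|]} |a''(ξ')|. -/
/-!
Apply the mean value theorem to `s ↦ a (ξ + s + l) - a (ξ + s)` for `|s| ≤ |η|`; its derivative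
`a' (ξ + s + l) - a' (ξ + s)` is at most `|l| K` by the mean value theorem for `a'`. Every point
involved lies within `|η| + |l| ≤ |ξ| / 2` of `ξ`, hence in the annulus `|ξ| / 2 ≤ |ξ'| ≤ 2 |ξ|`.
-/

open Metric

section DoubleDifference

variable {𝕜 : Type*} [RCLike 𝕜] {E : Type*} [NormedAddCommGroup E] [NormedSpace 𝕜 E]

theorem norm_double_sub_le_of_norm_deriv_deriv_le {a : 𝕜 → E} (ha : Differentiable 𝕜 a)
    (ha' : Differentiable 𝕜 (deriv a)) {ξ η l : 𝕜} {K : ℝ}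
    (hK : ∀ z ∈ closedBall ξ (‖η‖ + ‖l‖), ‖deriv (deriv a) z‖ ≤ K) :
    ‖a (ξ + η + l) - a (ξ + η) - a (ξ + l) + a ξ‖ ≤ ‖η‖ * ‖l‖ * K := by
  set F : 𝕜 → E := fun s => a (ξ + s + l) - a (ξ + s)
  have hF : ∀ s, HasDerivAt F (deriv a (ξ + s + l) - deriv a (ξ + s)) s := fun s =>
    (((ha _).hasDerivAt.comp_add_const _ _).comp_const_add _ _).sub
      ((ha _).hasDerivAt.comp_const_add _ _)
  have hF' : ∀ s ∈ closedBall (0 : 𝕜) ‖η‖, ‖deriv F s‖ ≤ K * ‖l‖ := by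
    intro s hs
    rw [mem_closedBall_zero_iff] at hs
    have hmem : ∀ t : 𝕜, ‖t‖ ≤ ‖l‖ → ξ + s + t ∈ closedBall ξ (‖η‖ + ‖l‖) := fun t ht => by
      rw [mem_closedBall_iff_norm, add_assoc, add_sub_cancel_left]
      exact (norm_add_le s t).trans (add_le_add hs ht)
    have := (convex_closedBall ξ (‖η‖ + ‖l‖)).norm_image_sub_le_of_norm_deriv_le
      (fun z _ => ha' z) hK (add_zero (ξ + s) ▸ hmem 0 (by simp)) (hmem l le_rfl)
    rw [(hF s).deriv]
    rwa [add_sub_cancel_left] at this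
  have := (convex_closedBall (0 : 𝕜) ‖η‖).norm_image_sub_le_of_norm_deriv_le
    (fun s _ => (hF s).differentiableAt) hF' (mem_closedBall_self (norm_nonneg _))
    (mem_closedBall_zero_iff.mpr le_rfl)
  calc ‖a (ξ + η + l) - a (ξ + η) - a (ξ + l) + a ξ‖ = ‖F η - F 0‖ := by
        simp only [F, add_zero]; congr 1; abel
    _ ≤ K * ‖l‖ * ‖η - 0‖ := this
    _ = ‖η‖ * ‖l‖ * K := by rw [sub_zero]; ring

end DoubleDifference

theorem mem_annulus_of_mem_closedBall_half {E : Type*} [SeminormedAddCommGroup E] {ξ x : E}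
    (hx : x ∈ closedBall ξ (‖ξ‖ / 2)) : ‖ξ‖ / 2 ≤ ‖x‖ ∧ ‖x‖ ≤ 2 * ‖ξ‖ := by
  rw [mem_closedBall_iff_norm] at hx
  have h₁ := norm_sub_norm_le ξ x
  have h₂ := norm_sub_norm_le x ξ
  rw [norm_sub_rev] at h₁
  constructor <;> linarith [norm_nonneg ξ]

theorem stmt5 (a : ℝ → ℝ) (ha : ContDiff ℝ 2 a) (ξ η l K : ℝ)
    (hη : |η| ≤ |ξ| / 4) (hl : |l| ≤ |ξ| / 4)
    (hK : ∀ ξ' : ℝ, |ξ| / 2 ≤ |ξ'| → |ξ'| ≤ 2 * |ξ| → |deriv (deriv a) ξ'| ≤ K) :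
    |a (ξ + η + l) - a (ξ + η) - a (ξ + l) + a ξ| ≤ |η| * |l| * K := by
  simpa only [Real.norm_eq_abs] using
    norm_double_sub_le_of_norm_deriv_deriv_le (ha.differentiable two_ne_zero)
      ha.differentiable_deriv_two fun z hz => by
        have hz' : z ∈ closedBall ξ (‖ξ‖ / 2) :=
          closedBall_subset_closedBall (by simp only [Real.norm_eq_abs]; linarith) hz
        obtain ⟨h₁, h₂⟩ := mem_annulus_of_mem_closedBall_half hz'
        exact hK z h₁ h₂
end

section
/- For N ≥ 1 and s ∈ [-3/4, 0], let m(ξ) = min(1, N^{-s}|ξ|^s) for ξ ≠ 0 (m(0)=1). Then for every dyadic pair λ ≤ μ and real numbers ξ₁, ξ₂, ξ₃ with ξ₁+ξ₂+ξ₃=0, |ξ₁| ∼ λ, |ξ₂|,|ξ₃| ∼ μ, and μ ≥ 1, one has |m²(ξ₁)ξ₁ + m²(ξ₂)ξ₂ + m²(ξ₃)ξ₃| ≤ C m²(λ) λ, where C depends only on s. -/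
/-!
Write `m(ξ)² = ⟨ξ/N⟩^{2s}` with `⟨x⟩ = max 1 |x|`. Since `ξ₃ = -(ξ₁ + ξ₂)`, the sum equals
`(m²(ξ₁) - m²(ξ₃)) ξ₁ + (m²(ξ₂) - m²(ξ₃)) ξ₂`. The first term is `≲ m²(λ) λ` because `m²` is
decreasing and doubling. In the second, `|ξ₂|` and `|ξ₃|` are both `∼ μ` and differ by at most
`|ξ₁| ≲ λ`, so the tangent-line bound for the convex function `t ↦ t^{2s}` gives
`|m²(ξ₂) - m²(ξ₃)| ≲ |s| m²(λ) λ / μ`, which is paid for by the factor `|ξ₂| ≲ μ`.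
-/

open Real

lemma one_add_mul_sub_one_le_rpow_of_nonpos {p t : ℝ} (hp : p ≤ 0) (ht : 0 < t) :
    1 + p * (t - 1) ≤ t ^ p :=
  calc 1 + p * (t - 1) ≤ log t * p + 1 := by nlinarith [log_le_sub_one_of_pos ht]
    _ ≤ exp (log t * p) := add_one_le_exp _
    _ = t ^ p := (rpow_def_of_pos ht p).symm

lemma rpow_sub_rpow_le_of_nonpos {p u v : ℝ} (hp : p ≤ 0) (hu : 0 < u) (hv : 0 < v) :
    u ^ p - v ^ p ≤ -p * u ^ p * ((v - u) / u) := by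
  have hsplit : v ^ p = u ^ p * (v / u) ^ p := by
    rw [← mul_rpow hu.le (div_pos hv hu).le, mul_div_cancel₀ _ hu.ne']
  have hbernoulli := one_add_mul_sub_one_le_rpow_of_nonpos hp (div_pos hv hu)
  calc u ^ p - v ^ p = u ^ p * (1 - (v / u) ^ p) := by rw [hsplit]; ring
    _ ≤ u ^ p * (-p * (v / u - 1)) := by gcongr; linarith
    _ = -p * u ^ p * ((v - u) / u) := by field_simp

/-- The multiplier `min (1, N^{-p} |ξ|^p)` written as `⟨ξ / N⟩ ^ p` with `⟨x⟩ = max 1 |x|`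
(see `iMethodMultiplier.min_one_mul_rpow_eq`); this form also takes the value `1` at `ξ = 0`. -/
noncomputable def iMethodMultiplier (N p ξ : ℝ) : ℝ := max 1 (|ξ| / N) ^ p

namespace iMethodMultiplier

variable {N p : ℝ}

lemma min_one_mul_rpow_eq (hN : 0 < N) (hp : p ≤ 0) {ξ : ℝ} (hξ : ξ ≠ 0) :
    min 1 (N ^ (-p) * |ξ| ^ p) = iMethodMultiplier N p ξ := by
  have hpos : (0 : ℝ) < |ξ| / N := div_pos (abs_pos.2 hξ) hN
  rw [iMethodMultiplier, (antitoneOn_rpow_Ioi_of_exponent_nonpos hp).map_max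
    (Set.mem_Ioi.2 one_pos) hpos, one_rpow, div_rpow (abs_nonneg ξ) hN.le, rpow_neg hN.le,
    inv_mul_eq_div]

lemma sq_eq (N p ξ : ℝ) : iMethodMultiplier N p ξ ^ 2 = iMethodMultiplier N (2 * p) ξ := by
  rw [iMethodMultiplier, iMethodMultiplier, ← rpow_natCast, ← rpow_mul (by positivity),
    mul_comm p]
  norm_num

lemma nonneg (N p ξ : ℝ) : 0 ≤ iMethodMultiplier N p ξ := by
  unfold iMethodMultiplier; positivity

lemma anti (hN : 0 < N) (hp : p ≤ 0) {ξ η : ℝ} (h : |ξ| ≤ |η|) :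
    iMethodMultiplier N p η ≤ iMethodMultiplier N p ξ :=
  rpow_le_rpow_of_nonpos (by positivity) (by gcongr) hp

lemma le_two_rpow_mul (hN : 0 < N) (hp : p ≤ 0) {ξ η : ℝ} (h : |η| ≤ 2 * |ξ|) :
    iMethodMultiplier N p ξ ≤ 2 ^ (-p) * iMethodMultiplier N p η := by
  set A := max 1 (|ξ| / N)
  have hA : 0 < A := by positivity
  have hBA : max 1 (|η| / N) ≤ 2 * A := by
    refine max_le (by linarith [le_max_left 1 (|ξ| / N)]) ?_
    calc |η| / N ≤ 2 * (|ξ| / N) := by rw [mul_div_assoc']; gcongr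
      _ ≤ 2 * A := by gcongr; exact le_max_right _ _
  calc A ^ p = 2 ^ (-p) * (2 * A) ^ p := by
        rw [mul_rpow zero_le_two hA.le, rpow_neg zero_le_two, inv_mul_cancel_left₀]
        positivity
    _ ≤ 2 ^ (-p) * iMethodMultiplier N p η := by
        gcongr
        exact rpow_le_rpow_of_nonpos (by positivity) hBA hp

lemma sub_le (hN : 0 < N) (hp : p ≤ 0) {ξ η : ℝ} (hξ : ξ ≠ 0) :
    iMethodMultiplier N p ξ - iMethodMultiplier N p η
      ≤ -p * iMethodMultiplier N p ξ * (|(|ξ| - |η|)| / |ξ|) := by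
  set A := max 1 (|ξ| / N)
  set B := max 1 (|η| / N)
  have hξN : 0 < |ξ| / N := div_pos (abs_pos.2 hξ) hN
  have hA : |ξ| / N ≤ A := le_max_right _ _
  have hBA : |B - A| ≤ |(|ξ| - |η|)| / N := by
    calc |B - A| ≤ |(|η| / N - |ξ| / N)| := by
          have h := abs_max_sub_max_le_abs (|η| / N) (|ξ| / N) 1
          rwa [max_comm (|η| / N), max_comm (|ξ| / N)] at h
      _ = |(|ξ| - |η|)| / N := by rw [← sub_div, abs_div, abs_of_pos hN, abs_sub_comm]
  have hp' : 0 ≤ -p := by linarith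
  calc A ^ p - B ^ p ≤ -p * A ^ p * ((B - A) / A) :=
        rpow_sub_rpow_le_of_nonpos hp (hξN.trans_le hA) (by positivity)
    _ ≤ -p * A ^ p * ((|(|ξ| - |η|)| / N) / (|ξ| / N)) := by
        gcongr
        exact (le_abs_self _).trans hBA
    _ = -p * A ^ p * (|(|ξ| - |η|)| / |ξ|) := by
        field_simp

lemma sub_le_of_le_abs (hN : 0 < N) (hp : p ≤ 0) {a ξ η : ℝ} (ha : 0 < a) (hξ : a ≤ |ξ|) :
    iMethodMultiplier N p ξ - iMethodMultiplier N p η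
      ≤ -p * iMethodMultiplier N p a * (|(|ξ| - |η|)| / a) := by
  have hp' : 0 ≤ -p := by linarith
  calc _ ≤ -p * iMethodMultiplier N p ξ * (|(|ξ| - |η|)| / |ξ|) :=
        sub_le hN hp (abs_pos.1 (ha.trans_le hξ))
    _ ≤ -p * iMethodMultiplier N p a * (|(|ξ| - |η|)| / a) :=
        mul_le_mul (mul_le_mul_of_nonneg_left (anti hN hp (by rwa [abs_of_pos ha])) hp')
          (div_le_div_of_nonneg_left (abs_nonneg _) ha hξ) (by positivity)
          (mul_nonneg hp' (nonneg N p a))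

lemma abs_sub_le (hN : 0 < N) (hp : p ≤ 0) {a ξ η : ℝ} (ha : 0 < a) (hξ : a ≤ |ξ|)
    (hη : a ≤ |η|) :
    |iMethodMultiplier N p ξ - iMethodMultiplier N p η|
      ≤ -p * iMethodMultiplier N p a * (|(|ξ| - |η|)| / a) := by
  refine abs_sub_le_iff.2 ⟨sub_le_of_le_abs hN hp ha hξ, ?_⟩
  rw [abs_sub_comm |ξ|]
  exact sub_le_of_le_abs hN hp ha hη

theorem abs_sum_mul_le (hN : 0 < N) (hp : p ≤ 0) {lam mu ξ₁ ξ₂ ξ₃ : ℝ} (hmu : 0 < mu)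
    (hlm : lam ≤ mu) (hsum : ξ₁ + ξ₂ + ξ₃ = 0) (h₁ : lam / 2 ≤ |ξ₁|) (h₁' : |ξ₁| ≤ 2 * lam)
    (h₂ : mu / 2 ≤ |ξ₂|) (h₂' : |ξ₂| ≤ 2 * mu) (h₃ : mu / 2 ≤ |ξ₃|) :
    |iMethodMultiplier N p ξ₁ * ξ₁ + iMethodMultiplier N p ξ₂ * ξ₂
        + iMethodMultiplier N p ξ₃ * ξ₃|
      ≤ 2 ^ (-p) * (2 - 8 * p) * iMethodMultiplier N p lam * lam := by
  set M := iMethodMultiplier N p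
  have hlam : 0 ≤ lam := by linarith [abs_nonneg ξ₁]
  have hp' : 0 ≤ -p := by linarith
  have hM : 0 ≤ 2 ^ (-p) * M lam := mul_nonneg (by positivity) (nonneg N p lam)
  have hdecomp : M ξ₁ * ξ₁ + M ξ₂ * ξ₂ + M ξ₃ * ξ₃
      = (M ξ₁ - M ξ₃) * ξ₁ + (M ξ₂ - M ξ₃) * ξ₂ := by
    linear_combination M ξ₃ * hsum
  have hlow : ∀ ζ, lam / 2 ≤ |ζ| → M ζ ≤ 2 ^ (-p) * M lam := fun ζ hζ ↦
    le_two_rpow_mul hN hp (by rw [abs_of_nonneg hlam]; linarith)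
  have hlow_diff : |M ξ₁ - M ξ₃| ≤ 2 ^ (-p) * M lam :=
    abs_sub_le_of_nonneg_of_le (nonneg N p _) (hlow ξ₁ h₁) (nonneg N p _)
      (hlow ξ₃ (by linarith))
  have hhigh_diff : |M ξ₂ - M ξ₃| ≤ -p * (2 ^ (-p) * M lam) * (2 * lam / (mu / 2)) := by
    have hgap : |(|ξ₂| - |ξ₃|)| ≤ 2 * lam := by
      calc |(|ξ₂| - |ξ₃|)| ≤ |ξ₂ - -ξ₃| := by
            simpa only [abs_neg] using abs_abs_sub_abs_le_abs_sub ξ₂ (-ξ₃)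
        _ = |ξ₁| := by rw [show ξ₂ - -ξ₃ = -ξ₁ by linarith, abs_neg]
        _ ≤ 2 * lam := h₁'
    calc |M ξ₂ - M ξ₃| ≤ -p * M (mu / 2) * (|(|ξ₂| - |ξ₃|)| / (mu / 2)) :=
          abs_sub_le hN hp (by positivity) h₂ h₃
      _ ≤ -p * (2 ^ (-p) * M lam) * (2 * lam / (mu / 2)) := by
          gcongr
          exact hlow _ (by rw [abs_of_pos (by positivity)]; linarith)
  calc |M ξ₁ * ξ₁ + M ξ₂ * ξ₂ + M ξ₃ * ξ₃|
      ≤ |M ξ₁ - M ξ₃| * |ξ₁| + |M ξ₂ - M ξ₃| * |ξ₂| := by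
        rw [hdecomp, ← abs_mul, ← abs_mul]; exact abs_add_le _ _
    _ ≤ 2 ^ (-p) * M lam * (2 * lam)
        + -p * (2 ^ (-p) * M lam) * (2 * lam / (mu / 2)) * (2 * mu) := by
        gcongr
    _ = 2 ^ (-p) * (2 - 8 * p) * M lam * lam := by
        field_simp; ring

end iMethodMultiplier

theorem stmt16_general (s : ℝ) (hs₂ : s ≤ 0) : ∃ C > (0:ℝ),
    ∀ (N : ℝ) (m : ℝ → ℝ) (lam mu ξ₁ ξ₂ ξ₃ : ℝ) (k l : ℤ),
    1 ≤ N →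
    (∀ ξ : ℝ, ξ ≠ 0 → m ξ = min 1 (N ^ (-s) * |ξ| ^ s)) → m 0 = 1 →
    lam = 2 ^ k → mu = 2 ^ l → lam ≤ mu → 1 ≤ mu →
    ξ₁ + ξ₂ + ξ₃ = 0 →
    lam / 2 ≤ |ξ₁| → |ξ₁| ≤ 2 * lam →
    mu / 2 ≤ |ξ₂| → |ξ₂| ≤ 2 * mu →
    mu / 2 ≤ |ξ₃| → |ξ₃| ≤ 2 * mu →
    |m ξ₁ ^ 2 * ξ₁ + m ξ₂ ^ 2 * ξ₂ + m ξ₃ ^ 2 * ξ₃| ≤ C * m lam ^ 2 * lam := by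
  refine ⟨2 ^ (-(2 * s)) * (2 - 8 * (2 * s)), mul_pos (by positivity) (by linarith), ?_⟩
  intro N m lam mu ξ₁ ξ₂ ξ₃ k l hN hm hm0 _ _ hlm hmu hsum h₁ h₁' h₂ h₂' h₃ _
  have hN0 : 0 < N := one_pos.trans_le hN
  have hm_sq : ∀ ξ, m ξ ^ 2 = iMethodMultiplier N (2 * s) ξ := by
    intro ξ
    rw [← iMethodMultiplier.sq_eq]
    rcases eq_or_ne ξ 0 with rfl | hξ
    · simp [iMethodMultiplier, hm0]
    · rw [hm ξ hξ, iMethodMultiplier.min_one_mul_rpow_eq hN0 hs₂ hξ]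
  simp only [hm_sq]
  exact iMethodMultiplier.abs_sum_mul_le hN0 (by linarith) (by linarith) hlm hsum
    h₁ h₁' h₂ h₂' h₃

theorem stmt16 (s : ℝ) (hs₁ : -3/4 ≤ s) (hs₂ : s ≤ 0) : ∃ C > (0:ℝ),
    ∀ (N : ℝ) (m : ℝ → ℝ) (lam mu ξ₁ ξ₂ ξ₃ : ℝ) (k l : ℤ),
    1 ≤ N →
    (∀ ξ : ℝ, ξ ≠ 0 → m ξ = min 1 (N ^ (-s) * |ξ| ^ s)) → m 0 = 1 →
    lam = 2 ^ k → mu = 2 ^ l → lam ≤ mu → 1 ≤ mu →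
    ξ₁ + ξ₂ + ξ₃ = 0 →
    lam / 2 ≤ |ξ₁| → |ξ₁| ≤ 2 * lam →
    mu / 2 ≤ |ξ₂| → |ξ₂| ≤ 2 * mu →
    mu / 2 ≤ |ξ₃| → |ξ₃| ≤ 2 * mu →
    |m ξ₁ ^ 2 * ξ₁ + m ξ₂ ^ 2 * ξ₂ + m ξ₃ ^ 2 * ξ₃| ≤ C * m lam ^ 2 * lam :=
  stmt16_general s hs₂
end

section
/- Let E²(t), E⁴(t) : [0,∞) → ℝ and ε₀ ∈ (0,1), N ≥ 1, and constants C₁, C₂ > 0 satisfy: (a) |E⁴(t) - E²(t)| ≤ C₁ ε₀³ whenever E²(t) ≤ 5ε₀², (b) E⁴ increases by at most C₂ε₀⁵N^{-15/4} on each unit time interval on which E² ≤ 5ε₀², (c) E²(0) = ε₀². Then for any integer M with C₂ M N^{-15/4} ≤ 1 and ε₀ small enough depending on C₁, C₂ (e.g. (2C₁+1)ε₀ ≤ 1), one has E²(t) ≤ 4ε₀² for all t ∈ [0, M]. -/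
/-!
Bootstrap: as long as `E2 ≤ 4ε₀²` on `[0, t]`, the hypotheses control `E4` along a chain of at most
`M` unit steps, so `E4` grows by at most `M C₂ ε₀⁵ N^{-15/4} ≤ ε₀⁵`; since `E4` is within `C₁ε₀³` of
`E2` at both ends, `E2 t ≤ ε₀² + 2C₁ε₀³ + ε₀⁵ ≤ 2ε₀²`. A continuity argument at the first time `E2`
reaches `4ε₀²` closes the bootstrap.
-/

open Set

theorem le_add_mul_of_forall_le_add_of_le_add_one {f : ℝ → ℝ} {δ t : ℝ} {n : ℕ}
    (ht : 0 ≤ t) (htn : t ≤ n)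
    (hstep : ∀ a b, 0 ≤ a → a ≤ b → b ≤ a + 1 → b ≤ t → f b ≤ f a + δ) :
    f t ≤ f 0 + n * δ := by
  rcases Nat.eq_zero_or_pos n with rfl | hn
  · obtain rfl : t = 0 := le_antisymm (by exact_mod_cast htn) ht
    simp
  have hn' : (0 : ℝ) < n := by exact_mod_cast hn
  -- `n` equal steps of length `t / n ≤ 1`, so exactly `n` increments are spent.
  set h := t / n
  have h0 : 0 ≤ h := by positivity
  have h1 : h ≤ 1 := (div_le_one hn').2 htn
  have hchain : ∀ k : ℕ, k ≤ n → f (k * h) ≤ f 0 + k * δ := by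
    intro k
    induction k with
    | zero => simp
    | succ k ih =>
      intro hk
      have hkn : (k + 1 : ℝ) ≤ n := by exact_mod_cast hk
      have hstep_k := hstep (k * h) ((k + 1) * h) (by positivity) (by nlinarith) (by nlinarith)
        (by calc (k + 1 : ℝ) * h ≤ n * h := by gcongr
              _ = t := mul_div_cancel₀ t hn'.ne')
      push_cast
      linarith [ih (Nat.le_of_succ_le hk)]
  simpa [h, mul_div_cancel₀ t hn'.ne'] using hchain n le_rfl

theorem le_of_continuous_of_bootstrap {g : ℝ → ℝ} (hg : Continuous g) {T a b : ℝ} (hab : a < b)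
    (h0 : g 0 < b)
    (hboot : ∀ t, 0 ≤ t → t ≤ T → (∀ τ, 0 ≤ τ → τ ≤ t → g τ ≤ b) → g t ≤ a) :
    ∀ t, 0 ≤ t → t ≤ T → g t ≤ a := by
  suffices hlt : ∀ t ∈ Icc 0 T, g t < b from fun t ht0 htT =>
    hboot t ht0 htT fun τ hτ0 hτt => (hlt τ ⟨hτ0, hτt.trans htT⟩).le
  by_contra! hcross
  obtain ⟨t₀, ht₀, hbt₀⟩ := hcross
  set B := Icc 0 T ∩ g ⁻¹' Ici b
  have hBbdd : BddBelow B := ⟨0, fun x hx => hx.1.1⟩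
  have hs : sInf B ∈ B :=
    (isClosed_Icc.inter (isClosed_Ici.preimage hg)).csInf_mem ⟨t₀, ht₀, hbt₀⟩ hBbdd
  -- `s` is the first time `g` reaches `b`.
  set s := sInf B
  have hs0 : 0 ≠ s := by
    rintro hs0
    rw [← hs0] at hs
    exact absurd hs.2 (not_le.2 h0)
  have hbefore : Ico 0 s ⊆ {x | g x ≤ b} := fun τ hτ => show g τ ≤ b from
    le_of_not_gt fun hgτ => not_le.2 hτ.2 (csInf_le hBbdd ⟨⟨hτ.1, hτ.2.le.trans hs.1.2⟩, hgτ.le⟩)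
  have hupto : Icc 0 s ⊆ {x | g x ≤ b} := by
    rw [← closure_Ico hs0]
    exact (isClosed_le hg continuous_const).closure_subset_iff.2 hbefore
  have hgs := hboot s hs.1.1 hs.1.2 fun τ hτ0 hτs => hupto ⟨hτ0, hτs⟩
  linarith [show b ≤ g s from hs.2]

theorem stmt19_general (E2 E4 : ℝ → ℝ) (ε₀ N C₁ C₂ : ℝ) (M : ℕ)
    (hε₀ : 0 < ε₀) (hε₁ : ε₀ < 1)
    (hcont : Continuous E2)
    (ha : ∀ t : ℝ, 0 ≤ t → E2 t ≤ 5 * ε₀ ^ 2 → |E4 t - E2 t| ≤ C₁ * ε₀ ^ 3)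
    (hb : ∀ t₁ t₂ : ℝ, 0 ≤ t₁ → t₁ ≤ t₂ → t₂ ≤ t₁ + 1 →
      (∀ τ : ℝ, t₁ ≤ τ → τ ≤ t₂ → E2 τ ≤ 5 * ε₀ ^ 2) →
      E4 t₂ ≤ E4 t₁ + C₂ * ε₀ ^ 5 * N ^ (-(15:ℝ)/4))
    (hc : E2 0 = ε₀ ^ 2)
    (hM : C₂ * M * N ^ (-(15:ℝ)/4) ≤ 1)
    (hsmall : (2 * C₁ + 1) * ε₀ ≤ 1) :
    ∀ t : ℝ, 0 ≤ t → t ≤ M → E2 t ≤ 4 * ε₀ ^ 2 := by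
  set δ := C₂ * ε₀ ^ 5 * N ^ (-(15:ℝ)/4)
  have hε₂ : 0 < ε₀ ^ 2 := by positivity
  have hMδ : M * δ ≤ ε₀ ^ 5 :=
    calc (M : ℝ) * δ = ε₀ ^ 5 * (C₂ * M * N ^ (-(15:ℝ)/4)) := by ring
      _ ≤ ε₀ ^ 5 := mul_le_of_le_one_right (by positivity) hM
  have hε₅ : ε₀ ^ 5 ≤ ε₀ ^ 3 := pow_le_pow_of_le_one hε₀.le hε₁.le (by norm_num)
  have hε₃ : (2 * C₁ + 1) * ε₀ ^ 3 ≤ ε₀ ^ 2 := by nlinarith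
  have hboot : ∀ t : ℝ, 0 ≤ t → t ≤ M →
      (∀ τ : ℝ, 0 ≤ τ → τ ≤ t → E2 τ ≤ 4 * ε₀ ^ 2) → E2 t ≤ 2 * ε₀ ^ 2 := by
    intro t ht0 htM hbound
    have h5 : ∀ τ : ℝ, 0 ≤ τ → τ ≤ t → E2 τ ≤ 5 * ε₀ ^ 2 := fun τ h1 h2 =>
      (hbound τ h1 h2).trans (by linarith)
    have hE4 : E4 t ≤ E4 0 + M * δ :=
      le_add_mul_of_forall_le_add_of_le_add_one ht0 htM fun a b ha0 hab hb1 hbt =>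
        hb a b ha0 hab hb1 fun τ h1 h2 => h5 τ (ha0.trans h1) (h2.trans hbt)
    have h0 := abs_le.1 (ha 0 le_rfl (by linarith))
    have ht := abs_le.1 (ha t ht0 (h5 t ht0 le_rfl))
    linarith
  intro t ht0 htM
  linarith [le_of_continuous_of_bootstrap hcont (by linarith : 2 * ε₀ ^ 2 < 4 * ε₀ ^ 2)
    (by linarith) hboot t ht0 htM]

theorem stmt19 (E2 E4 : ℝ → ℝ) (ε₀ N C₁ C₂ : ℝ) (M : ℕ)
    (hε₀ : 0 < ε₀) (hε₁ : ε₀ < 1) (hN : 1 ≤ N) (hC₁ : 0 < C₁) (hC₂ : 0 < C₂)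
    (hcont : Continuous E2)
    (ha : ∀ t : ℝ, 0 ≤ t → E2 t ≤ 5 * ε₀ ^ 2 → |E4 t - E2 t| ≤ C₁ * ε₀ ^ 3)
    (hb : ∀ t₁ t₂ : ℝ, 0 ≤ t₁ → t₁ ≤ t₂ → t₂ ≤ t₁ + 1 →
      (∀ τ : ℝ, t₁ ≤ τ → τ ≤ t₂ → E2 τ ≤ 5 * ε₀ ^ 2) →
      E4 t₂ ≤ E4 t₁ + C₂ * ε₀ ^ 5 * N ^ (-(15:ℝ)/4))
    (hc : E2 0 = ε₀ ^ 2)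
    (hM : C₂ * M * N ^ (-(15:ℝ)/4) ≤ 1)
    (hsmall : (2 * C₁ + 1) * ε₀ ≤ 1) :
    ∀ t : ℝ, 0 ≤ t → t ≤ M → E2 t ≤ 4 * ε₀ ^ 2 :=
  stmt19_general E2 E4 ε₀ N C₁ C₂ M hε₀ hε₁ hcont ha hb hc hM hsmall
end
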